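/- arXiv:2211.02756 — 2 statements merged into one kernel-verified Lean document; each statement's English description precedes it below -/
import Mathlib

section
/- Weighted trace reduction: let M₁, M₂ be Hermitian q^n×q^n complex matrices and K ⊂ J ⊆ {1,…,n}. Then tr^J_K(A^{(J)}(z; M₁, M₂)) = A^{(K)}(z; M₁, M₂), and likewise tr^J_K(B^{(J)}(z; M₁, M₂)) = B^{(K)}(z; M₁, M₂). -/
open Matrix Polynomial
open scoped BigOperators ComplexConjugate Kronecker

noncomputable section

/-- Generalized Pauli `X` (cyclic shift) on `ℂ^q`. -/
def Xmat (q : ℕ) : Matrix (Fin q) (Fin q) ℂ :=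
  fun i j => if (i : ℕ) = ((j : ℕ) + 1) % q then 1 else 0

/-- Generalized Pauli `Z` (clock) on `ℂ^q`, `Z|j⟩ = ζ^j |j⟩` with `ζ = exp(2πi/q)`. -/
def Zmat (q : ℕ) : Matrix (Fin q) (Fin q) ℂ :=
  Matrix.diagonal fun j => Complex.exp (2 * (Real.pi : ℂ) * Complex.I / (q : ℂ)) ^ (j : ℕ)

/-- Single-qudit Pauli `E(a,b) = X^a Z^b` for a label `(a,b) ∈ (ℤ/qℤ)²`. -/
def Epauli (q : ℕ) (p : ZMod q × ZMod q) : Matrix (Fin q) (Fin q) ℂ :=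
  Xmat q ^ p.1.val * Zmat q ^ p.2.val

/-- Multi-qudit Pauli `E(p) = E(p₁) ⊗ ⋯ ⊗ E(pₙ)` on the space indexed by `ι → Fin q`. -/
def EV (q : ℕ) {ι : Type} [Fintype ι] (p : ι → ZMod q × ZMod q) :
    Matrix (ι → Fin q) (ι → Fin q) ℂ :=
  fun v w => ∏ i, Epauli q (p i) (v i) (w i)

/-- Weight of a Pauli label vector: the number of non-identity factors. -/
def wtL (q : ℕ) {ι : Type} [Fintype ι] (p : ι → ZMod q × ZMod q) : ℕ :=
  (Finset.univ.filter fun i => p i ≠ 0).card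

/-- Combine a label on legs `J` and a label on the complementary legs into a full label. -/
def glue {ι α : Type} [Fintype ι] [DecidableEq ι] (J : Finset ι)
    (e : {j // j ∈ J} → α) (f : {j // j ∈ Jᶜ} → α) : ι → α :=
  fun i => if h : i ∈ J then e ⟨i, h⟩ else f ⟨i, Finset.mem_compl.mpr h⟩

/-- Tensor weight enumerator `A^{(J)}(z; M₁, M₂)`, valued in `ℂ[z]`. -/
def tA (q : ℕ) [NeZero q] {ι : Type} [Fintype ι] [DecidableEq ι] (J : Finset ι)
    (M₁ M₂ : Matrix (ι → Fin q) (ι → Fin q) ℂ)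
    (e e' : {j // j ∈ J} → ZMod q × ZMod q) : Polynomial ℂ :=
  ∑ f : {j // j ∈ Jᶜ} → ZMod q × ZMod q,
    Polynomial.C (Matrix.trace ((EV q (glue J e f))ᴴ * M₁) *
        Matrix.trace (EV q (glue J e' f) * M₂)) * Polynomial.X ^ wtL q f

/-- Tensor weight enumerator `B^{(J)}(z; M₁, M₂)`, valued in `ℂ[z]`. -/
def tB (q : ℕ) [NeZero q] {ι : Type} [Fintype ι] [DecidableEq ι] (J : Finset ι)
    (M₁ M₂ : Matrix (ι → Fin q) (ι → Fin q) ℂ)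
    (e e' : {j // j ∈ J} → ZMod q × ZMod q) : Polynomial ℂ :=
  ∑ f : {j // j ∈ Jᶜ} → ZMod q × ZMod q,
    Polynomial.C (Matrix.trace ((EV q (glue J e f))ᴴ * M₁ * EV q (glue J e' f) * M₂)) *
      Polynomial.X ^ wtL q f

/-- Weighted trace `tr^J_K` taking a `J`-legged tensor enumerator to a `K`-legged one. -/
def trJK (q : ℕ) [NeZero q] {ι : Type} [Fintype ι] [DecidableEq ι] {J : Finset ι}
    (K : Finset ι) (hKJ : K ⊆ J)
    (T : ({j // j ∈ J} → ZMod q × ZMod q) → ({j // j ∈ J} → ZMod q × ZMod q) →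
      Polynomial ℂ)
    (f f' : {j // j ∈ K} → ZMod q × ZMod q) : Polynomial ℂ :=
  ∑ e : {j // j ∈ J \ K} → ZMod q × ZMod q,
    Polynomial.X ^ wtL q e *
      T (fun j => if h : j.val ∈ K then f ⟨j.val, h⟩
            else e ⟨j.val, Finset.mem_sdiff.mpr ⟨j.2, h⟩⟩)
        (fun j => if h : j.val ∈ K then f' ⟨j.val, h⟩
            else e ⟨j.val, Finset.mem_sdiff.mpr ⟨j.2, h⟩⟩)

/-- Index equivalence `(J \ K) ⊕ Jᶜ ≃ Kᶜ` when `K ⊆ J`. -/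
def idxE {ι : Type} [Fintype ι] [DecidableEq ι] {J K : Finset ι} (hKJ : K ⊆ J) :
    ({j // j ∈ J \ K} ⊕ {j // j ∈ Jᶜ}) ≃ {j // j ∈ Kᶜ} where
  toFun x := match x with
    | .inl j => ⟨j.1, Finset.mem_compl.mpr (Finset.mem_sdiff.mp j.2).2⟩
    | .inr j => ⟨j.1, Finset.mem_compl.mpr (fun h => Finset.mem_compl.mp j.2 (hKJ h))⟩
  invFun i := if h : i.1 ∈ J then
      .inl ⟨i.1, Finset.mem_sdiff.mpr ⟨h, Finset.mem_compl.mp i.2⟩⟩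
    else .inr ⟨i.1, Finset.mem_compl.mpr h⟩
  left_inv x := by
    rcases x with j | j
    · simp [(Finset.mem_sdiff.mp j.2).1]
    · simp [Finset.mem_compl.mp j.2]
  right_inv i := by
    by_cases h : i.1 ∈ J <;> simp [h]

/-- Function-space equivalence induced by `idxE`. -/
def funE {ι : Type} [Fintype ι] [DecidableEq ι] {J K : Finset ι} (hKJ : K ⊆ J)
    (α : Type) :
    ({j // j ∈ Kᶜ} → α) ≃ ({j // j ∈ J \ K} → α) × ({j // j ∈ Jᶜ} → α) :=
  (Equiv.arrowCongr (idxE hKJ).symm (Equiv.refl α)).trans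
    (Equiv.sumArrowEquivProdArrow _ _ α)

lemma wt_split (q : ℕ) {n : ℕ} {J K : Finset (Fin n)} (hKJ : K ⊆ J)
    (g : {j // j ∈ Kᶜ} → ZMod q × ZMod q) :
    wtL q g = wtL q ((funE hKJ _ g).1) + wtL q ((funE hKJ _ g).2) := by
  unfold wtL
  rw [Finset.card_filter, Finset.card_filter, Finset.card_filter]
  rw [← Fintype.sum_equiv (idxE hKJ)
    (fun x => if g (idxE hKJ x) ≠ 0 then 1 else 0)
    (fun i => if g i ≠ 0 then 1 else 0) (fun x => rfl)]
  rw [Fintype.sum_sum_type]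
  rfl

lemma key (q : ℕ) [NeZero q] {n : ℕ} {J K : Finset (Fin n)} (hKJ : K ⊆ J)
    (F : ((Fin n) → ZMod q × ZMod q) → ((Fin n) → ZMod q × ZMod q) → ℂ)
    (fK fK' : {j // j ∈ K} → ZMod q × ZMod q) :
    trJK q K hKJ (fun e e' => ∑ f : {j // j ∈ Jᶜ} → ZMod q × ZMod q,
        Polynomial.C (F (glue J e f) (glue J e' f)) * Polynomial.X ^ wtL q f) fK fK'
      = ∑ g : {j // j ∈ Kᶜ} → ZMod q × ZMod q,
          Polynomial.C (F (glue K fK g) (glue K fK' g)) * Polynomial.X ^ wtL q g := by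
  unfold trJK
  simp_rw [Finset.mul_sum]
  rw [← Fintype.sum_prod_type']
  refine (Fintype.sum_equiv (funE hKJ (ZMod q × ZMod q)) _ _ fun g => ?_).symm
  have hglue : ∀ (h : {j // j ∈ K} → ZMod q × ZMod q),
      glue K h g =
        glue J (fun j => if hh : j.val ∈ K then h ⟨j.val, hh⟩
            else (funE hKJ _ g).1 ⟨j.val, Finset.mem_sdiff.mpr ⟨j.2, hh⟩⟩)
          ((funE hKJ _ g).2) := by
    intro h
    funext i
    unfold glue
    by_cases hiJ : i ∈ J
    · rw [dif_pos hiJ]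
      dsimp only
      by_cases hiK : i ∈ K
      · rw [dif_pos hiK, dif_pos hiK]
      · rw [dif_neg hiK, dif_neg hiK]
        rfl
    · rw [dif_neg hiJ, dif_neg (fun hK => hiJ (hKJ hK))]
      rfl
  rw [hglue fK, hglue fK', wt_split q hKJ g]
  ring

/-- Weighted trace reduction: `tr^J_K (A^{(J)}) = A^{(K)}` and `tr^J_K (B^{(J)}) = B^{(K)}`. -/
theorem stmt12 (q n : ℕ) [NeZero q] (hq : 2 ≤ q) (hn : 1 ≤ n)
    (M₁ M₂ : Matrix ((Fin n) → Fin q) ((Fin n) → Fin q) ℂ)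
    (hM₁ : M₁.IsHermitian) (hM₂ : M₂.IsHermitian)
    (J K : Finset (Fin n)) (hKJ : K ⊆ J) (hne : K ≠ J) :
    trJK q K hKJ (tA q J M₁ M₂) = tA q K M₁ M₂ ∧
      trJK q K hKJ (tB q J M₁ M₂) = tB q K M₁ M₂ := by
  constructor
  · funext f f'
    exact key q hKJ
      (fun p p' => Matrix.trace ((EV q p)ᴴ * M₁) * Matrix.trace (EV q p' * M₂)) f f'
  · funext f f'
    exact key q hKJ
      (fun p p' => Matrix.trace ((EV q p)ᴴ * M₁ * EV q p' * M₂)) f f'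
end
end

section
/- Bell-state decomposition over a unitary basis: let q ≥ 2 and let ℰ be a finite family of q² unitary q×q complex matrices that are pairwise trace-orthogonal, i.e. Tr(E F†) = 0 for distinct E, F ∈ ℰ. Let |β⟩ = q^{−1/2} Σ_{j=0}^{q−1} |j⟩⊗|j⟩ ∈ ℂ^q ⊗ ℂ^q. Then |β⟩⟨β| = q^{−2} Σ_{E ∈ ℰ} E ⊗ E̅, where E̅ denotes the entrywise complex conjugate of E and ⊗ is the Kronecker product. -/
open Matrix
open scoped BigOperators ComplexConjugate Kronecker

noncomputable section

/-! Flatten the `q²` matrices `E i` into the rows of a square matrix `M`. Unitarity and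
trace-orthogonality say `M Mᴴ = q • 1`, and since `M` is square also `Mᴴ M = q • 1`.
Entrywise this is the completeness relation `∑ i, E i a b * conj (E i c d) = q δ_ac δ_bd`,
i.e. `∑ i, E i ⊗ conj (E i) = q • |ω⟩⟨ω|` for the unnormalized Bell vector
`ω = ∑ⱼ |j⟩⊗|j⟩ = √q β`. -/

/-- The (normalized) maximally entangled Bell state `|β⟩ = q^{-1/2} Σⱼ |j⟩⊗|j⟩`. -/
def bell (q : ℕ) : Fin q × Fin q → ℂ :=
  fun jk => if jk.1 = jk.2 then ((Real.sqrt q : ℝ) : ℂ)⁻¹ else 0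

theorem Matrix.mul_eq_smul_one_comm_of_card_eq {m n K : Type*} [Fintype m] [DecidableEq m]
    [Fintype n] [DecidableEq n] [Field K] {A : Matrix m n K} {B : Matrix n m K} {c : K}
    (hcard : Fintype.card m = Fintype.card n) (hc : c ≠ 0) (h : A * B = c • 1) :
    B * A = c • 1 := by
  have hAB : A * (c⁻¹ • B) = 1 := by
    rw [Matrix.mul_smul, h, smul_smul, inv_mul_cancel₀ hc, one_smul]
  have hBA := (mul_eq_one_comm_of_equiv (Fintype.equivOfCardEq hcard)).mp hAB
  rw [← smul_right_inj (inv_ne_zero hc), ← Matrix.smul_mul, hBA, smul_smul,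
    inv_mul_cancel₀ hc, one_smul]

def bellUnnormalized (n : Type*) [DecidableEq n] : n × n → ℂ :=
  fun p => if p.1 = p.2 then 1 else 0

section UnitaryBasis

variable {n κ : Type*} [Fintype n]

def rowsMatrix (E : κ → Matrix n n ℂ) : Matrix κ (n × n) ℂ :=
  Matrix.of fun i p => E i p.1 p.2

theorem rowsMatrix_mul_conjTranspose_apply (E : κ → Matrix n n ℂ) (i j : κ) :
    (rowsMatrix E * (rowsMatrix E)ᴴ) i j = trace (E i * (E j)ᴴ) := by
  simp only [mul_apply, conjTranspose_apply, rowsMatrix, of_apply, trace, diag,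
    Fintype.sum_prod_type]

variable [DecidableEq n] [DecidableEq κ]

theorem rowsMatrix_mul_conjTranspose (E : κ → Matrix n n ℂ)
    (hunit : ∀ i, E i ∈ unitaryGroup n ℂ) (horth : ∀ i j, i ≠ j → trace (E i * (E j)ᴴ) = 0) :
    rowsMatrix E * (rowsMatrix E)ᴴ = (Fintype.card n : ℂ) • 1 := by
  ext i j
  rw [rowsMatrix_mul_conjTranspose_apply, Matrix.smul_apply, one_apply]
  rcases eq_or_ne i j with rfl | hij
  · rw [← star_eq_conjTranspose, mem_unitaryGroup_iff.mp (hunit i), trace_one]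
    simp
  · simp [horth i j hij, hij]

variable [Fintype κ]

theorem conjTranspose_rowsMatrix_mul (E : κ → Matrix n n ℂ)
    (hcard : Fintype.card κ = Fintype.card n ^ 2)
    (hunit : ∀ i, E i ∈ unitaryGroup n ℂ) (horth : ∀ i j, i ≠ j → trace (E i * (E j)ᴴ) = 0) :
    (rowsMatrix E)ᴴ * rowsMatrix E = (Fintype.card n : ℂ) • 1 := by
  rcases isEmpty_or_nonempty n with hn | hn
  · exact Subsingleton.elim _ _
  refine mul_eq_smul_one_comm_of_card_eq (by rw [hcard, Fintype.card_prod, sq]) ?_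
    (rowsMatrix_mul_conjTranspose E hunit horth)
  exact_mod_cast Fintype.card_ne_zero

theorem sum_kronecker_map_conj (E : κ → Matrix n n ℂ)
    (hcard : Fintype.card κ = Fintype.card n ^ 2)
    (hunit : ∀ i, E i ∈ unitaryGroup n ℂ) (horth : ∀ i j, i ≠ j → trace (E i * (E j)ᴴ) = 0) :
    ∑ i, E i ⊗ₖ (E i).map conj =
      (Fintype.card n : ℂ) • vecMulVec (bellUnnormalized n) (bellUnnormalized n) := by
  ext ⟨a, c⟩ ⟨b, d⟩
  have h := congr_fun₂ (conjTranspose_rowsMatrix_mul E hcard hunit horth) (c, d) (a, b)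
  simp only [mul_apply, conjTranspose_apply, rowsMatrix, of_apply, Matrix.smul_apply, one_apply,
    Prod.mk.injEq, smul_eq_mul] at h
  simp only [Matrix.sum_apply, kroneckerMap_apply, map_apply, Matrix.smul_apply, vecMulVec_apply,
    bellUnnormalized, smul_eq_mul]
  simp_rw [mul_comm (E _ a b)]
  rw [← Complex.star_def, h]
  by_cases hac : a = c <;> by_cases hbd : b = d <;> simp [hac, hbd, eq_comm]

end UnitaryBasis

theorem bell_eq_smul_bellUnnormalized (q : ℕ) :
    bell q = ((Real.sqrt q : ℝ) : ℂ)⁻¹ • bellUnnormalized (Fin q) := by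
  ext p
  simp [bell, bellUnnormalized]

theorem vecMulVec_bell (q : ℕ) :
    vecMulVec (bell q) (fun w => conj (bell q w)) =
      (q : ℂ)⁻¹ • vecMulVec (bellUnnormalized (Fin q)) (bellUnnormalized (Fin q)) := by
  have hconj : (fun w => conj (bell q w)) = bell q := by
    ext p
    simp [bell, apply_ite conj, Complex.conj_ofReal]
  have hsq : (((Real.sqrt q : ℝ) : ℂ)⁻¹) ^ 2 = (q : ℂ)⁻¹ := by
    rw [inv_pow, ← Complex.ofReal_pow, Real.sq_sqrt q.cast_nonneg, Complex.ofReal_natCast]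
  rw [hconj, bell_eq_smul_bellUnnormalized, smul_vecMulVec, vecMulVec_smul, smul_smul, ← sq, hsq]

theorem stmt18_general (q : ℕ)
    (E : Fin (q ^ 2) → Matrix (Fin q) (Fin q) ℂ)
    (hunit : ∀ i, E i ∈ Matrix.unitaryGroup (Fin q) ℂ)
    (horth : ∀ i j, i ≠ j → Matrix.trace (E i * (E j)ᴴ) = 0) :
    Matrix.vecMulVec (bell q) (fun w => (starRingEnd ℂ) (bell q w)) =
      ((q : ℂ) ^ 2)⁻¹ • ∑ i, (E i) ⊗ₖ ((E i).map (starRingEnd ℂ)) := by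
  have hcard : Fintype.card (Fin (q ^ 2)) = Fintype.card (Fin q) ^ 2 := by simp
  rw [vecMulVec_bell, sum_kronecker_map_conj E hcard hunit horth, Fintype.card_fin, smul_smul]
  congr 1
  rcases eq_or_ne (q : ℂ) 0 with hq | hq
  · simp [hq]
  · field_simp

/-- Bell-state decomposition over a unitary basis:
`|β⟩⟨β| = q^{-2} Σ_{E ∈ ℰ} E ⊗ E̅`. -/
theorem stmt18 (q : ℕ) (hq : 2 ≤ q)
    (E : Fin (q ^ 2) → Matrix (Fin q) (Fin q) ℂ)
    (hunit : ∀ i, E i ∈ Matrix.unitaryGroup (Fin q) ℂ)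
    (horth : ∀ i j, i ≠ j → Matrix.trace (E i * (E j)ᴴ) = 0) :
    Matrix.vecMulVec (bell q) (fun w => (starRingEnd ℂ) (bell q w)) =
      ((q : ℂ) ^ 2)⁻¹ • ∑ i, (E i) ⊗ₖ ((E i).map (starRingEnd ℂ)) :=
  stmt18_general q E hunit horth
end
end
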